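/- arXiv:2302.01861 — 2 statements merged into one kernel-verified Lean document; each statement's English description precedes it below -/
import Mathlib

section
/- For B_kk' = ((p_k p_k')^{-1} E_kk') ∘ J(p) with k ≠ k' and Σ = A ∘ I(p) + B ∘ J(p), one has tr(B_kk' Σ B_kk' Σ) = b_k'k². -/
/-! Block-constant matrices `C ∘ J(p)` multiply like `K × K` matrices with the block sizes
inserted as weights, `(C ∘ J) (D ∘ J) = (C P D) ∘ J` with `P = diag p`, and `A ∘ I(p)` acts on
them through `diag a`; so `M Σ = (C S) ∘ J` with `C = (p_k p_k')⁻¹ E_kk'` and `S = diag a + P B`,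
and the trace becomes `tr (C S P C S P)`. Since `E_kk' X E_kk' = X_k'k E_kk'`, this equals
`((p_k p_k')⁻¹ (S P)_k'k)²`, and `(S P)_k'k = p_k' b_k'k p_k` because `k ≠ k'`. -/

open Matrix

/-- `A ∘ I(p)`: block-diagonal matrix with `a k • I_{p k}` as `k`-th diagonal block. -/
noncomputable def blockI {K : ℕ} (p : Fin K → ℕ) (a : Fin K → ℝ) :
    Matrix ((k : Fin K) × Fin (p k)) ((k : Fin K) × Fin (p k)) ℝ :=
  Matrix.diagonal fun x => a x.1

/-- `B ∘ J(p)`: block matrix whose `(k,k')` block is `B k k' • 1_{p k × p k'}`. -/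
noncomputable def blockJ {K : ℕ} (p : Fin K → ℕ) (B : Matrix (Fin K) (Fin K) ℝ) :
    Matrix ((k : Fin K) × Fin (p k)) ((k : Fin K) × Fin (p k)) ℝ :=
  Matrix.of fun x y => B x.1 y.1

lemma blockJ_add {K : ℕ} (p : Fin K → ℕ) (C D : Matrix (Fin K) (Fin K) ℝ) :
    blockJ p (C + D) = blockJ p C + blockJ p D := by
  ext x y
  simp [blockJ]

lemma blockJ_mul_blockI {K : ℕ} (p : Fin K → ℕ) (C : Matrix (Fin K) (Fin K) ℝ)
    (a : Fin K → ℝ) :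
    blockJ p C * blockI p a = blockJ p (C * diagonal a) := by
  ext x y
  simp [blockJ, blockI, mul_diagonal]

lemma blockJ_mul_blockJ {K : ℕ} (p : Fin K → ℕ) (C D : Matrix (Fin K) (Fin K) ℝ) :
    blockJ p C * blockJ p D = blockJ p (C * diagonal (fun l => (p l : ℝ)) * D) := by
  ext x y
  rw [mul_apply, ← Finset.univ_sigma_univ, Finset.sum_sigma]
  show _ = (C * diagonal (fun l => (p l : ℝ)) * D) x.1 y.1
  rw [mul_apply]
  simp only [blockJ, of_apply, mul_diagonal, Finset.sum_const, Finset.card_univ,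
    Fintype.card_fin, nsmul_eq_mul]
  exact Finset.sum_congr rfl fun l _ => by ring

lemma blockJ_mul_blockI_add_blockJ {K : ℕ} (p : Fin K → ℕ) (C B : Matrix (Fin K) (Fin K) ℝ)
    (a : Fin K → ℝ) :
    blockJ p C * (blockI p a + blockJ p B)
      = blockJ p (C * (diagonal a + diagonal (fun l => (p l : ℝ)) * B)) := by
  rw [mul_add, blockJ_mul_blockI, blockJ_mul_blockJ, ← blockJ_add, Matrix.mul_add,
    Matrix.mul_assoc]

lemma trace_blockJ {K : ℕ} (p : Fin K → ℕ) (C : Matrix (Fin K) (Fin K) ℝ) :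
    trace (blockJ p C) = trace (C * diagonal (fun l => (p l : ℝ))) := by
  rw [trace, ← Finset.univ_sigma_univ, Finset.sum_sigma]
  simp [blockJ, trace, mul_comm]

theorem trace_Bkk'_sq_general {K : ℕ} (p : Fin K → ℕ) (hp : ∀ l, 1 < p l)
    (a : Fin K → ℝ) (B : Matrix (Fin K) (Fin K) ℝ)
    (k k' : Fin K) (hkk' : k ≠ k')
    (M : Matrix ((l : Fin K) × Fin (p l)) ((l : Fin K) × Fin (p l)) ℝ)
    (hM : M = blockJ p (((p k : ℝ) * (p k' : ℝ))⁻¹ • Matrix.single k k' 1)) :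
    Matrix.trace
        ((M * (blockI p a + blockJ p B)) * (M * (blockI p a + blockJ p B)))
      = (B k' k) ^ 2 := by
  subst hM
  have hpk : (p k : ℝ) ≠ 0 := by have := hp k; positivity
  have hpk' : (p k' : ℝ) ≠ 0 := by have := hp k'; positivity
  set P : Matrix (Fin K) (Fin K) ℝ := diagonal fun l => (p l : ℝ)
  set S : Matrix (Fin K) (Fin K) ℝ := diagonal a + P * B
  have hS : (S * P) k' k = p k' * B k' k * p k := by
    simp [S, P, mul_diagonal, diagonal_apply_ne _ hkk'.symm]
  rw [blockJ_mul_blockI_add_blockJ, blockJ_mul_blockJ, trace_blockJ, smul_single, smul_eq_mul,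
    mul_one]
  set c : ℝ := ((p k : ℝ) * p k')⁻¹
  calc trace (single k k' c * S * P * (single k k' c * S) * P)
      = trace (single k k' c * (S * P) * single k k' c * (S * P)) := by
        simp only [Matrix.mul_assoc]
    _ = c * (S * P) k' k * c * (S * P) k' k := by
        rw [single_mul_mul_single, trace_single_mul, smul_eq_mul]
    _ = B k' k ^ 2 := by
        rw [hS]
        simp only [c]
        field_simp

/-- For `B_kk' = ((p_k p_k')⁻¹ E_kk') ∘ J(p)` with `k ≠ k'` and
`Σ = A ∘ I(p) + B ∘ J(p)`, one has `tr(B_kk' Σ B_kk' Σ) = b_k'k²`. -/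
theorem trace_Bkk'_sq {K : ℕ} (p : Fin K → ℕ) (hp : ∀ l, 1 < p l)
    (a : Fin K → ℝ) (B : Matrix (Fin K) (Fin K) ℝ) (hB : B.IsSymm)
    (k k' : Fin K) (hkk' : k ≠ k')
    (M : Matrix ((l : Fin K) × Fin (p l)) ((l : Fin K) × Fin (p l)) ℝ)
    (hM : M = blockJ p (((p k : ℝ) * (p k' : ℝ))⁻¹ • Matrix.single k k' 1)) :
    Matrix.trace
        ((M * (blockI p a + blockJ p B)) * (M * (blockI p a + blockJ p B)))
      = (B k' k) ^ 2 :=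
  trace_Bkk'_sq_general p hp a B k k' hkk' M hM
end

section
/- Block determinant recursion for uniform-block matrices: for the (p+q)×(p+q) uniform-block matrix Σ* built from a p×p uniform-block matrix Σ(A,B,p) by appending one block of size q > 1 with diagonal parameter a, within-block parameter b, and cross-block parameters η = (η_1,...,η_K), the characteristic polynomial satisfies det(Σ* − λ I_{p+q}) = (a − λ)^{q−1} · ∏_{k=1}^K (a_kk − λ)^{p_k − 1} · det(Δ* − λ I_{K+1}), where Δ* = A* + B* P* with A* = diag(A, a), B* = [[B, η],[ηᵀ, b]], P* = diag(P, q). -/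
open Matrix

open Polynomial in
/-- Evaluating the characteristic polynomial of a real matrix. -/
lemma ub_charpoly_eval' {n : Type*} [Fintype n] [DecidableEq n] (M : Matrix n n ℝ) (t : ℝ) :
    (M.charpoly).eval t = (t • (1 : Matrix n n ℝ) - M).det := by
  rw [Matrix.charpoly, ← Polynomial.coe_evalRingHom, RingHom.map_det]
  congr 1
  ext i j
  by_cases h : i = j <;>
    simp [Matrix.charmatrix_apply, h, Matrix.one_apply, Matrix.diagonal_apply]

/-- The key determinant identity, at a scalar `t` avoiding all the `a k`. -/
lemma ub_det_step {K : ℕ} (p : Fin K → ℕ) (hp : ∀ k, 1 ≤ p k)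
    (a : Fin K → ℝ) (B : Matrix (Fin K) (Fin K) ℝ) (t : ℝ) (ht : ∀ k, t - a k ≠ 0) :
    (t • (1 : Matrix ((k : Fin K) × Fin (p k)) ((k : Fin K) × Fin (p k)) ℝ)
        - (blockI p a + blockJ p B)).det
      = (∏ k, (t - a k) ^ (p k - 1))
        * (t • (1 : Matrix (Fin K) (Fin K) ℝ)
            - (Matrix.diagonal a + B * Matrix.diagonal (fun k => (p k : ℝ)))).det := by
  classical
  set ι := (k : Fin K) × Fin (p k)
  set U : Matrix ι (Fin K) ℝ := Matrix.of fun x k => if x.1 = k then 1 else 0 with hU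
  set d : ι → ℝ := fun x => t - a x.1 with hd
  have hdne : ∀ x, d x ≠ 0 := fun x => ht x.1
  set D : Matrix ι ι ℝ := Matrix.diagonal d with hD
  set E : Matrix ι ι ℝ := Matrix.diagonal (fun x => (d x)⁻¹) with hE
  have hDE : D * E = 1 := by
    rw [hD, hE, Matrix.diagonal_mul_diagonal]
    rw [show (fun x => d x * (d x)⁻¹) = fun _ => (1:ℝ) from
      funext fun x => mul_inv_cancel₀ (hdne x)]
    exact Matrix.diagonal_one
  have hUB : U * B * Uᵀ = blockJ p B := by
    ext x y
    simp [Matrix.mul_apply, hU, blockJ, ite_mul, mul_ite, Finset.sum_ite_eq]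
  have h1 : t • (1 : Matrix ι ι ℝ) - (blockI p a + blockJ p B) = D - U * B * Uᵀ := by
    rw [hUB, sub_add_eq_sub_sub]
    congr 1
    ext x y
    by_cases h : x = y <;>
      simp [hD, blockI, Matrix.diagonal_apply, h, Matrix.one_apply, hd]
  have h2 : D - U * B * Uᵀ = D * (1 - E * U * B * Uᵀ) := by
    rw [Matrix.mul_sub, Matrix.mul_one,
      show E * U * B * Uᵀ = E * (U * B * Uᵀ) by simp only [Matrix.mul_assoc],
      ← Matrix.mul_assoc D E, hDE, Matrix.one_mul]
  set W : Matrix (Fin K) (Fin K) ℝ := Matrix.diagonal (fun k => (p k : ℝ) * (t - a k)⁻¹) with hW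
  have hEU : E * U = Matrix.of fun x k' => (d x)⁻¹ * (if x.1 = k' then 1 else 0) := by
    ext x k'
    rw [hE, Matrix.diagonal_mul]
    simp [hU]
  have hUEU : Uᵀ * (E * U) = W := by
    ext k k'
    rw [Matrix.mul_apply, hEU, hW]
    simp only [Matrix.transpose_apply, hU, Matrix.of_apply, Matrix.diagonal_apply]
    rw [← Finset.univ_sigma_univ, Finset.sum_sigma]
    simp only [hd]
    simp [Finset.sum_ite_eq, Finset.sum_ite_eq', ite_mul, mul_ite, Finset.sum_const,
      Finset.card_univ, nsmul_eq_mul, mul_comm]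
  have h3 : (1 - E * U * B * Uᵀ).det = (1 - B * W).det := by
    rw [show E * U * B * Uᵀ = (E * U) * (B * Uᵀ) by rw [Matrix.mul_assoc],
      Matrix.det_one_sub_mul_comm,
      show B * Uᵀ * (E * U) = B * (Uᵀ * (E * U)) by rw [Matrix.mul_assoc], hUEU]
  have h4 : (1 - B * W) * Matrix.diagonal (fun k => t - a k)
      = t • (1 : Matrix (Fin K) (Fin K) ℝ)
            - (Matrix.diagonal a + B * Matrix.diagonal (fun k => (p k : ℝ))) := by
    rw [Matrix.sub_mul, Matrix.one_mul, Matrix.mul_assoc, hW, Matrix.diagonal_mul_diagonal]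
    rw [show (fun k => (p k:ℝ) * (t - a k)⁻¹ * (t - a k)) = fun k => (p k : ℝ) from
      funext fun k => by rw [mul_assoc, inv_mul_cancel₀ (ht k), mul_one]]
    rw [sub_add_eq_sub_sub]
    congr 1
    ext i j
    by_cases h : i = j <;> simp [Matrix.diagonal_apply, h, Matrix.one_apply]
  have hdetD : D.det = ∏ k, (t - a k) ^ (p k) := by
    rw [hD, Matrix.det_diagonal, ← Finset.univ_sigma_univ, Finset.prod_sigma]
    simp [hd]
  have h5 : ((1 : Matrix (Fin K) (Fin K) ℝ) - B * W).det * ∏ k, (t - a k)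
      = (t • (1 : Matrix (Fin K) (Fin K) ℝ)
            - (Matrix.diagonal a + B * Matrix.diagonal (fun k => (p k : ℝ)))).det := by
    rw [← h4, Matrix.det_mul, Matrix.det_diagonal]
  rw [h1, h2, Matrix.det_mul, h3, hdetD, ← h5]
  rw [show (∏ k, (t - a k) ^ p k) = (∏ k, (t - a k) ^ (p k - 1)) * ∏ k, (t - a k) by
    rw [← Finset.prod_mul_distrib]
    exact Finset.prod_congr rfl fun k _ => by
      rw [← pow_succ, Nat.sub_add_cancel (hp k)]]
  ring

open Polynomial in
/-- Charpoly factorization for a general uniform-block matrix. -/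
lemma ub_charpoly_general {K : ℕ} (p : Fin K → ℕ) (hp : ∀ k, 1 ≤ p k)
    (a : Fin K → ℝ) (B : Matrix (Fin K) (Fin K) ℝ) :
    (blockI p a + blockJ p B).charpoly
      = (∏ k, (Polynomial.X - Polynomial.C (a k)) ^ (p k - 1))
        * (Matrix.diagonal a + B * Matrix.diagonal (fun k => (p k : ℝ))).charpoly := by
  apply Polynomial.eq_of_infinite_eval_eq
  apply Set.Infinite.mono (s := (Set.range a)ᶜ) ?_ ((Set.finite_range a).infinite_compl)
  intro t ht
  have ht' : ∀ k, t - a k ≠ 0 := fun k h => ht ⟨k, (sub_eq_zero.mp h).symm⟩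
  simp only [Set.mem_setOf_eq, eval_mul, ub_charpoly_eval', ub_det_step p hp a B t ht',
    eval_prod, eval_pow, eval_sub, eval_X, eval_C]

/-- Block determinant recursion for uniform-block matrices: appending one block of
size `q` with diagonal parameter `aq`, within-block parameter `bq`, and cross-block
parameters `η`, the characteristic polynomial of the extended uniform-block matrix
`Σ*` factors as `(X − aq)^(q−1) ∏ₖ (X − a_kk)^(p_k−1)` times the characteristic
polynomial of `Δ* = A* + B* P*`. -/
theorem ub_charpoly_append {K : ℕ} (p : Fin K → ℕ) (hp : ∀ k, 1 < p k)
    (q : ℕ) (hq : 1 < q)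
    (a : Fin K → ℝ) (aq bq : ℝ)
    (B : Matrix (Fin K) (Fin K) ℝ) (hB : B.IsSymm) (η : Fin K → ℝ)
    (p' : Fin (K + 1) → ℕ) (hp' : p' = Fin.snoc p q)
    (a' : Fin (K + 1) → ℝ) (ha' : a' = Fin.snoc a aq)
    (B' : Matrix (Fin (K + 1)) (Fin (K + 1)) ℝ)
    (hB' : B' = Matrix.of fun (i j : Fin (K + 1)) =>
        if hi : (i : ℕ) < K then
          if hj : (j : ℕ) < K then B ⟨i, hi⟩ ⟨j, hj⟩ else η ⟨i, hi⟩
        else if hj : (j : ℕ) < K then η ⟨j, hj⟩ else bq) :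
    (blockI p' a' + blockJ p' B').charpoly
      = (∏ k, (Polynomial.X - Polynomial.C (a k)) ^ (p k - 1))
        * (Polynomial.X - Polynomial.C aq) ^ (q - 1)
        * (Matrix.diagonal a' + B' * Matrix.diagonal (fun k => (p' k : ℝ))).charpoly := by
  have hp1 : ∀ k, 1 ≤ p' k := by
    subst hp'
    intro k
    induction k using Fin.lastCases with
    | last => simpa using hq.le
    | cast i => simpa using (hp i).le
  rw [ub_charpoly_general p' hp1 a' B']
  congr 1
  rw [Fin.prod_univ_castSucc]
  subst hp' ha'
  simp
end
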